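/- The output y_{t_N} of the order-N Hyena operator with filters h¹,…,h^N and projections x^i = Pⁱχ can be written as y_{t_N} = Σ over multi-indices (m₀,…,m_N) ∈ {1,…,M}^{N+1} of η_{(m₀,…,m_N)} ∏_{j=0}^{N} χ_{m_j}, where η_m = P^N_{t_N,m_N} ∏_{i=1}^{N} ( Σ_{t_{i-1}=0}^{L} hⁱ_{t_i - t_{i-1}} P^{i-1}_{t_{i-1}, m_{i-1}} ) — i.e., a homogeneous degree-(N+1) form in χ whose coefficients are products of convolutions applied to the projection matrices. -/
import Mathlib


theorem hyena_key {L M : ℕ} [NeZero L] (N : ℕ)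
    (P : ℕ → Matrix (ZMod L) (Fin M) ℝ) (hfil : ℕ → ZMod L → ℝ) (χ : Fin M → ℝ)
    (z : ℕ → ZMod L → ℝ)
    (hz1 : ∀ t, z 1 t = ∑ m, P 0 t m * χ m)
    (hzrec : ∀ n, 1 ≤ n → n ≤ N → ∀ t,
      z (n + 1) t = (∑ m, P n t m * χ m) * ∑ s, hfil n (t - s) * z n s) :
    ∀ n, n ≤ N → ∀ t, z (n + 1) t =
      ∑ f : Fin (n + 1) → Fin M,
        (∑ g : Fin n → ZMod L,
            (∏ i : Fin n,
              hfil (i + 1) (Fin.snoc (α := fun _ => ZMod L) g t i.succ - Fin.snoc (α := fun _ => ZMod L) g t i.castSucc)) *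
              ∏ j : Fin (n + 1), P j (Fin.snoc (α := fun _ => ZMod L) g t j) (f j)) *
          ∏ j : Fin (n + 1), χ (f j) := by
  intro n
  induction n with
  | zero =>
    intro _ t
    rw [hz1, Fintype.sum_equiv (Equiv.funUnique (Fin 1) (Fin M)).symm
      (fun m => P 0 t m * χ m) _ ?_]
    intro m
    simp [Fin.snoc]
  | succ n ih =>
    intro hle t
    have hfsum : ∀ F : (Fin (n + 2) → Fin M) → ℝ,
        ∑ f, F f = ∑ m : Fin M, ∑ f : Fin (n + 1) → Fin M, F (Fin.snoc f m) := by
      intro F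
      rw [← Equiv.sum_comp (Fin.snocEquiv (fun _ : Fin (n + 2) => Fin M)) F,
        Fintype.sum_prod_type]
      rfl
    have hgsum : ∀ F : (Fin (n + 1) → ZMod L) → ℝ,
        ∑ g, F g = ∑ s : ZMod L, ∑ g : Fin n → ZMod L, F (Fin.snoc g s) := by
      intro F
      rw [← Equiv.sum_comp (Fin.snocEquiv (fun _ : Fin (n + 1) => ZMod L)) F,
        Fintype.sum_prod_type]
      rfl
    rw [hzrec (n + 1) (by omega) hle t]
    simp only [ih (by omega)]
    conv_rhs => rw [hfsum]
    simp only [hgsum]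
    simp only [Fin.prod_univ_castSucc, Fin.snoc_last, Fin.succ_castSucc, Fin.snoc_castSucc,
      Fin.coe_castSucc, Fin.val_last, Fin.succ_last]
    simp only [Finset.sum_mul, Finset.mul_sum, mul_assoc]
    rw [Finset.sum_comm]
    conv_rhs => rw [Finset.sum_comm]
    refine Finset.sum_congr rfl fun f _ => ?_
    refine ((Finset.sum_congr rfl fun s _ => Finset.sum_comm).trans Finset.sum_comm).trans ?_
    refine Finset.sum_congr rfl fun m _ => Finset.sum_congr rfl fun s _ =>
      Finset.sum_congr rfl fun g _ => ?_
    ring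



/-- The order-N Hyena output is a homogeneous degree-(N+1) form in the input `χ`,
with coefficients given by nested sums of products of the filters and projections. -/
theorem hyena_coefficients {L M N : ℕ} [NeZero L] (hN : 1 ≤ N)
    (P : ℕ → Matrix (ZMod L) (Fin M) ℝ) (hfil : ℕ → ZMod L → ℝ) (χ : Fin M → ℝ)
    (z : ℕ → ZMod L → ℝ)
    (hz1 : ∀ t, z 1 t = ∑ m, P 0 t m * χ m)
    (hzrec : ∀ n, 1 ≤ n → n ≤ N → ∀ t,
      z (n + 1) t = (∑ m, P n t m * χ m) * ∑ s, hfil n (t - s) * z n s)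
    (tN : ZMod L) :
    z (N + 1) tN =
      ∑ f : Fin (N + 1) → Fin M,
        (∑ g : Fin N → ZMod L,
            (∏ i : Fin N,
              hfil (i + 1) (Fin.snoc (α := fun _ => ZMod L) g tN i.succ - Fin.snoc (α := fun _ => ZMod L) g tN i.castSucc)) *
              ∏ j : Fin (N + 1), P j (Fin.snoc (α := fun _ => ZMod L) g tN j) (f j)) *
          ∏ j : Fin (N + 1), χ (f j) := by
  exact hyena_key N P hfil χ z hz1 hzrec N le_rfl tN
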